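/- Let q be a prime power, r, m, n positive integers with m, n ≤ r, F_{q^r} the field with q^r elements, and ψ a nontrivial additive character of F_{q^r}. Let M ⊆ F_{q^r} and N ⊆ F_{q^r} \ {0} be subsets of nonzero elements, and α : M → ℂ, β : N → ℂ weights bounded by A and B respectively. Then |Σ_{f ∈ M} Σ_{g ∈ N} α_f β_g ψ(f⁻¹ g⁻¹)|⁴ ≤ A⁴ B⁴ (#M)² (#N)² · |Σ_{u ∈ F_{q^r}} Σ_{v ∈ F_{q^r}} I_M(u)·I_N(v)·ψ(uv)|, where I_M(u) = #{(f₁, f₂) ∈ M² : f₁⁻¹ - f₂⁻¹ = u} and I_N(v) = #{(g₁, g₂) ∈ N² : g₁⁻¹ - g₂⁻¹ = v}. -/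

import Mathlib

open scoped Classical

open Finset ComplexConjugate

/-!
Write the sum as `∑_f α_f T_f` with `T_f = ∑_g β_g ψ(f⁻¹g⁻¹)`. Cauchy–Schwarz over `f` gives
`|S|² ≤ A² #M ∑_f |T_f|²`. Expanding `|T_f|²` and summing over `f` first turns `∑_f |T_f|²` into
`∑_{g₁,g₂} β_{g₁} conj β_{g₂} U(g₁⁻¹ - g₂⁻¹)` with `U(v) = ∑_f ψ(f⁻¹v)`, which is at most
`B² ∑_v I_N(v) |U(v)|`. A second, weighted, Cauchy–Schwarz (the weights `I_N` have total mass
`#N²`) bounds its square by `#N² ∑_v I_N(v) |U(v)|²`; finally `|U(v)|² = ∑_u I_M(u) ψ(uv)`, so this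
last sum is exactly the double character sum of the statement, which is therefore real and
nonnegative.
-/

theorem norm_sum_mul_sq_le {ι E : Type*} [SeminormedRing E] {s : Finset ι} {α x : ι → E}
    {A : ℝ} (hα : ∀ i ∈ s, ‖α i‖ ≤ A) :
    ‖∑ i ∈ s, α i * x i‖ ^ 2 ≤ A ^ 2 * #s * ∑ i ∈ s, ‖x i‖ ^ 2 := by
  calc ‖∑ i ∈ s, α i * x i‖ ^ 2 ≤ (∑ i ∈ s, ‖α i‖ * ‖x i‖) ^ 2 := by
        gcongr
        exact (norm_sum_le _ _).trans (sum_le_sum fun i _ => norm_mul_le _ _)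
    _ ≤ (∑ i ∈ s, ‖α i‖ ^ 2) * ∑ i ∈ s, ‖x i‖ ^ 2 := sum_mul_sq_le_sq_mul_sq _ _ _
    _ ≤ (∑ _i ∈ s, A ^ 2) * ∑ i ∈ s, ‖x i‖ ^ 2 := by
        gcongr with i hi
        exact hα i hi
    _ = A ^ 2 * #s * ∑ i ∈ s, ‖x i‖ ^ 2 := by rw [sum_const, nsmul_eq_mul, mul_comm (A ^ 2)]

theorem sq_sum_mul_le_sum_mul_sum_mul_sq {ι : Type*} {s : Finset ι} {w x : ι → ℝ}
    (hw : ∀ i ∈ s, 0 ≤ w i) :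
    (∑ i ∈ s, w i * x i) ^ 2 ≤ (∑ i ∈ s, w i) * ∑ i ∈ s, w i * x i ^ 2 :=
  sum_sq_le_sum_mul_sum_of_sq_le_mul s hw (fun i hi => mul_nonneg (hw i hi) (sq_nonneg _))
    fun i _ => le_of_eq (by ring)

section DifferenceCount

variable {ι κ R : Type*}

noncomputable def diffRepCount [Sub R] (s : Finset ι) (a : ι → R) (u : R) : ℕ :=
  ((s ×ˢ s).filter fun t => a t.1 - a t.2 = u).card

section Counting

variable [Sub R] [Fintype R]

theorem sum_product_comp_sub_eq_sum_diffRepCount_smul {M : Type*} [AddCommMonoid M]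
    (s : Finset ι) (a : ι → R) (F : R → M) :
    ∑ t ∈ s ×ˢ s, F (a t.1 - a t.2) = ∑ u, diffRepCount s a u • F u := by
  rw [← sum_fiberwise' (s ×ˢ s) (fun t => a t.1 - a t.2) F]
  simp only [sum_const, diffRepCount]

theorem sum_diffRepCount (s : Finset ι) (a : ι → R) :
    ∑ u, (diffRepCount s a u : ℝ) = (#s : ℝ) ^ 2 := by
  simpa [sq] using (sum_product_comp_sub_eq_sum_diffRepCount_smul s a fun _ => (1 : ℝ)).symm

end Counting

variable [CommRing R] (ψ : AddChar R ℂ)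

theorem norm_sum_addChar_sq [Fintype R] (s : Finset ι) (a : ι → R) (v : R) :
    ((‖∑ i ∈ s, ψ (a i * v)‖ ^ 2 : ℝ) : ℂ) = ∑ u, (diffRepCount s a u : ℂ) * ψ (u * v) := by
  push_cast
  rw [← Complex.mul_conj', map_sum, sum_mul_sum, ← sum_product']
  simp_rw [← AddChar.map_neg_eq_conj, ← AddChar.map_add_eq_mul, ← neg_mul, ← add_mul,
    ← sub_eq_add_neg, ← nsmul_eq_mul]
  exact sum_product_comp_sub_eq_sum_diffRepCount_smul s a fun u => ψ (u * v)

theorem sum_sum_diffRepCount_mul_addChar [Fintype R] (s : Finset ι) (t : Finset κ) (a : ι → R)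
    (b : κ → R) :
    ∑ u, ∑ v, (diffRepCount s a u : ℂ) * diffRepCount t b v * ψ (u * v)
      = ((∑ v, diffRepCount t b v * ‖∑ i ∈ s, ψ (a i * v)‖ ^ 2 : ℝ) : ℂ) := by
  rw [sum_comm]
  push_cast
  refine sum_congr rfl fun v _ => ?_
  rw [← Complex.ofReal_pow, norm_sum_addChar_sq, mul_sum]
  exact sum_congr rfl fun u _ => by ring

theorem sum_norm_sum_mul_addChar_sq [Finite R] (s : Finset ι) (t : Finset κ) (a : ι → R) (b : κ → R)
    (β : κ → ℂ) :
    ((∑ i ∈ s, ‖∑ j ∈ t, β j * ψ (a i * b j)‖ ^ 2 : ℝ) : ℂ)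
      = ∑ p ∈ t ×ˢ t, β p.1 * conj (β p.2) * ∑ i ∈ s, ψ (a i * (b p.1 - b p.2)) := by
  push_cast
  simp_rw [← Complex.mul_conj', map_sum, sum_mul_sum, mul_sum, sum_product]
  rw [sum_comm]
  refine sum_congr rfl fun j₁ _ => ?_
  rw [sum_comm]
  refine sum_congr rfl fun j₂ _ => sum_congr rfl fun i _ => ?_
  rw [map_mul (starRingEnd ℂ), ← AddChar.map_neg_eq_conj, mul_sub, sub_eq_add_neg, ← neg_mul,
    AddChar.map_add_eq_mul]
  ring

theorem sum_norm_sum_mul_addChar_sq_le [Fintype R] {s : Finset ι} {t : Finset κ} {a : ι → R}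
    {b : κ → R} {β : κ → ℂ} {B : ℝ} (hβ : ∀ j ∈ t, ‖β j‖ ≤ B) :
    ∑ i ∈ s, ‖∑ j ∈ t, β j * ψ (a i * b j)‖ ^ 2
      ≤ B ^ 2 * ∑ v, diffRepCount t b v * ‖∑ i ∈ s, ψ (a i * v)‖ := by
  rw [← Real.norm_of_nonneg (by positivity : 0 ≤ ∑ i ∈ s, ‖∑ j ∈ t, β j * ψ (a i * b j)‖ ^ 2),
    ← Complex.norm_real, sum_norm_sum_mul_addChar_sq]
  calc _ ≤ ∑ p ∈ t ×ˢ t, ‖β p.1 * conj (β p.2) * ∑ i ∈ s, ψ (a i * (b p.1 - b p.2))‖ :=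
        norm_sum_le _ _
    _ ≤ ∑ p ∈ t ×ˢ t, B ^ 2 * ‖∑ i ∈ s, ψ (a i * (b p.1 - b p.2))‖ := by
        gcongr with p hp
        obtain ⟨hp₁, hp₂⟩ := mem_product.mp hp
        rw [norm_mul, norm_mul, Complex.norm_conj, sq]
        gcongr
        · exact (norm_nonneg _).trans (hβ _ hp₁)
        · exact hβ _ hp₁
        · exact hβ _ hp₂
    _ = B ^ 2 * ∑ v, diffRepCount t b v * ‖∑ i ∈ s, ψ (a i * v)‖ := by
        rw [← mul_sum,
          sum_product_comp_sub_eq_sum_diffRepCount_smul t b fun v => ‖∑ i ∈ s, ψ (a i * v)‖]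
        simp only [nsmul_eq_mul]

end DifferenceCount

theorem stmt_17_general
    (K : Type*) [Field K] [Fintype K]
    (ψ : AddChar K ℂ) (M N : Finset K)
    (α β : K → ℂ) (A B : ℝ)
    (hα : ∀ f ∈ M, ‖α f‖ ≤ A) (hβ : ∀ g ∈ N, ‖β g‖ ≤ B) :
    ‖∑ f ∈ M, ∑ g ∈ N, α f * β g * ψ (f⁻¹ * g⁻¹)‖ ^ 4
      ≤ A ^ 4 * B ^ 4 * (M.card : ℝ) ^ 2 * (N.card : ℝ) ^ 2 *
          ‖∑ u : K, ∑ v : K,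
            ((((M ×ˢ M).filter fun t => t.1⁻¹ - t.2⁻¹ = u).card : ℂ)) *
            ((((N ×ˢ N).filter fun t => t.1⁻¹ - t.2⁻¹ = v).card : ℂ)) *
            ψ (u * v)‖ := by
  set S := ∑ f ∈ M, ∑ g ∈ N, α f * β g * ψ (f⁻¹ * g⁻¹)
  set R := ∑ f ∈ M, ‖∑ g ∈ N, β g * ψ (f⁻¹ * g⁻¹)‖ ^ 2
  set W := ∑ v, (diffRepCount N (·⁻¹) v : ℝ) * ‖∑ f ∈ M, ψ (f⁻¹ * v)‖
  set D := ∑ v, (diffRepCount N (·⁻¹) v : ℝ) * ‖∑ f ∈ M, ψ (f⁻¹ * v)‖ ^ 2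
  have hS : ‖S‖ ^ 2 ≤ A ^ 2 * #M * R := by
    rw [show S = ∑ f ∈ M, α f * ∑ g ∈ N, β g * ψ (f⁻¹ * g⁻¹) by simp only [S, mul_assoc, mul_sum]]
    exact norm_sum_mul_sq_le hα
  have hR : R ≤ B ^ 2 * W := sum_norm_sum_mul_addChar_sq_le ψ hβ
  have hW : W ^ 2 ≤ #N ^ 2 * D := by
    rw [← sum_diffRepCount N (·⁻¹)]
    exact sq_sum_mul_le_sum_mul_sum_mul_sq fun v _ => Nat.cast_nonneg _
  have hD : ‖∑ u, ∑ v, (diffRepCount M (·⁻¹) u : ℂ) * diffRepCount N (·⁻¹) v * ψ (u * v)‖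
      = D := by
    rw [sum_sum_diffRepCount_mul_addChar, Complex.norm_real, Real.norm_of_nonneg (by positivity)]
  calc ‖S‖ ^ 4 = (‖S‖ ^ 2) ^ 2 := by ring
    _ ≤ (A ^ 2 * #M * (B ^ 2 * W)) ^ 2 := by
        gcongr
        exact hS.trans (by gcongr)
    _ = A ^ 4 * B ^ 4 * #M ^ 2 * W ^ 2 := by ring
    _ ≤ A ^ 4 * B ^ 4 * #M ^ 2 * (#N ^ 2 * D) := by gcongr
    _ = A ^ 4 * B ^ 4 * #M ^ 2 * #N ^ 2 *
          ‖∑ u, ∑ v, (diffRepCount M (·⁻¹) u : ℂ) * diffRepCount N (·⁻¹) v * ψ (u * v)‖ := by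
        rw [hD]
        ring

/-- For `K = F_{q^r}`, a nontrivial additive character `ψ`, sets
`M, N` of nonzero elements and weights `α, β` bounded by `A, B`:
`|Σ_{f ∈ M} Σ_{g ∈ N} α_f β_g ψ(f⁻¹g⁻¹)|⁴
  ≤ A⁴B⁴(#M)²(#N)²·|Σ_u Σ_v I_M(u)·I_N(v)·ψ(uv)|`,
where `I_M(u) = #{(f₁,f₂) ∈ M² : f₁⁻¹ - f₂⁻¹ = u}` and similarly for `I_N`. -/
theorem stmt_17 (q r m n p k : ℕ) (hp : p.Prime) (hk : 0 < k) (hq : q = p ^ k)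
    (hm : 0 < m) (hmr : m ≤ r) (hn : 0 < n) (hnr : n ≤ r)
    (K : Type*) [Field K] [Fintype K] (hK : Fintype.card K = q ^ r)
    (ψ : AddChar K ℂ) (hψ : ψ ≠ 1) (M N : Finset K)
    (hM : ∀ f ∈ M, f ≠ 0) (hN : ∀ g ∈ N, g ≠ 0)
    (α β : K → ℂ) (A B : ℝ)
    (hα : ∀ f ∈ M, ‖α f‖ ≤ A) (hβ : ∀ g ∈ N, ‖β g‖ ≤ B) :
    ‖∑ f ∈ M, ∑ g ∈ N, α f * β g * ψ (f⁻¹ * g⁻¹)‖ ^ 4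
      ≤ A ^ 4 * B ^ 4 * (M.card : ℝ) ^ 2 * (N.card : ℝ) ^ 2 *
          ‖∑ u : K, ∑ v : K,
            ((((M ×ˢ M).filter fun t => t.1⁻¹ - t.2⁻¹ = u).card : ℂ)) *
            ((((N ×ˢ N).filter fun t => t.1⁻¹ - t.2⁻¹ = v).card : ℂ)) *
            ψ (u * v)‖ :=
  stmt_17_general K ψ M N α β A B hα hβ
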